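/- arXiv:1905.03062 — 4 statements merged into one kernel-verified Lean document; each statement's English description precedes it below -/
import Mathlib

section
/- Let G be a group generated by two subgroups F and K (i.e. G = ⟨F ∪ K⟩), and let H be a subgroup contained in both F and K such that H has finite index in F and finite index in K. Then H is almost normal in G. -/
/-! Commensurable subgroups have the same commensurator, and every subgroup lies in its own
commensurator. Hence `F` and `K`, being commensurable with `H`, lie in the commensurator of `H`,
which is therefore all of `G`. -/

/-- The conjugate subgroup `gHg⁻¹`. -/
def conjSubgroup {G : Type*} [Group G] (g : G) (H : Subgroup G) : Subgroup G :=
  H.map (MulAut.conj g).toMonoidHom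

/-- A subgroup `H ≤ G` is almost normal if `H` is commensurable with each of
its conjugates `gHg⁻¹`. -/
def AlmostNormal {G : Type*} [Group G] (H : Subgroup G) : Prop :=
  ∀ g : G, Subgroup.Commensurable H (conjSubgroup g H)

open Pointwise

namespace Subgroup

theorem conjSubgroup_eq_toConjAct_smul {G : Type*} [Group G] (g : G) (H : Subgroup G) :
    conjSubgroup g H = ConjAct.toConjAct g • H :=
  rfl

theorem commensurable_of_le_of_relIndex_ne_zero {G : Type*} [Group G] {H F : Subgroup G}
    (hHF : H ≤ F) (hFfin : H.relIndex F ≠ 0) : Commensurable H F :=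
  ⟨hFfin, by simp [relIndex_eq_one.mpr hHF]⟩

theorem le_commensurator_self {G : Type*} [Group G] (F : Subgroup G) :
    F ≤ Commensurable.commensurator F := fun _ hg => by
  rw [Commensurable.commensurator_mem_iff, conjAct_pointwise_smul_eq_self (le_normalizer hg)]

theorem le_commensurator_of_le_of_relIndex_ne_zero {G : Type*} [Group G] {H F : Subgroup G}
    (hHF : H ≤ F) (hFfin : H.relIndex F ≠ 0) : F ≤ Commensurable.commensurator H :=
  (commensurable_of_le_of_relIndex_ne_zero hHF hFfin).eq ▸ le_commensurator_self F

theorem almostNormal_iff_commensurator_eq_top {G : Type*} [Group G] (H : Subgroup G) :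
    AlmostNormal H ↔ Commensurable.commensurator H = ⊤ := by
  simp only [AlmostNormal, eq_top_iff', Commensurable.commensurator_mem_iff,
    conjSubgroup_eq_toConjAct_smul, Commensurable.comm]

end Subgroup

/-- If `G` is generated by subgroups `F` and `K`, and `H` is a subgroup contained
in both `F` and `K` with finite index in each, then `H` is almost normal in `G`. -/
theorem almostNormal_of_finiteIndex_in_generating_pair {G : Type*} [Group G]
    (F K H : Subgroup G)
    (hgen : Subgroup.closure ((F : Set G) ∪ (K : Set G)) = ⊤)
    (hHF : H ≤ F) (hHK : H ≤ K)
    (hFfin : H.relIndex F ≠ 0) (hKfin : H.relIndex K ≠ 0) :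
    AlmostNormal H := by
  rw [Subgroup.almostNormal_iff_commensurator_eq_top, eq_top_iff, ← hgen, Subgroup.closure_le]
  exact Set.union_subset (Subgroup.le_commensurator_of_le_of_relIndex_ne_zero hHF hFfin)
    (Subgroup.le_commensurator_of_le_of_relIndex_ne_zero hHK hKfin)
end

section
/- Let G be a group with a finite generating set S, equipped with the word metric, and let H ≤ G be a subgroup. Then H is almost normal in G if and only if for every g ∈ G the Hausdorff distance between the left coset gH and H (as subsets of the metric space G) is finite. -/
open Pointwise

/-- The word length of `g` with respect to the generating set `S`: the least `n`
such that `g` is a product of `n` elements of `S ∪ S⁻¹`. -/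
noncomputable def wordLength {G : Type*} [Group G] (S : Set G) (g : G) : ℕ :=
  sInf {n : ℕ | ∃ l : List G, l.length = n ∧ (∀ x ∈ l, x ∈ S ∪ S⁻¹) ∧ l.prod = g}

/-- The word metric on `G` with respect to the generating set `S`. -/
noncomputable def wordDist {G : Type*} [Group G] (S : Set G) (g k : G) : ℝ :=
  (wordLength S (g⁻¹ * k) : ℝ)

/-!
Write `B_r` for the closed `r`-ball about `1`. By left invariance and symmetry of the word
metric, `H ⊆ N_r(gH)` means `H ⊆ gH · B_r = (gHg⁻¹) · gB_r`, and `gH ⊆ N_r(H)` means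
`H ⊆ g⁻¹H · B_r = (g⁻¹Hg) · g⁻¹B_r`. Balls are finite and every finite set lies in a ball, so the
two conditions say that `H` is covered by finitely many right cosets of `gHg⁻¹`, resp. `g⁻¹Hg`,
that is, `H ∩ gHg⁻¹` resp. `H ∩ g⁻¹Hg` has finite index in `H`. Conjugating the latter by `g`,
together they say that `H` and `gHg⁻¹` are commensurable.
-/

theorem exists_nonneg_and_and_iff {P Q : ℝ → Prop} (hP : Monotone P) (hQ : Monotone Q) :
    (∃ r, 0 ≤ r ∧ P r ∧ Q r) ↔ (∃ r, P r) ∧ ∃ r, Q r := by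
  refine ⟨fun ⟨r, _, hPr, hQr⟩ => ⟨⟨r, hPr⟩, r, hQr⟩, fun ⟨⟨r, hPr⟩, s, hQs⟩ => ?_⟩
  refine ⟨max (max r s) 0, le_max_right _ _, hP ?_ hPr, hQ ?_ hQs⟩ <;> simp

section

variable {G : Type*} [Group G]

theorem mem_conjSubgroup {g x : G} {H : Subgroup G} :
    x ∈ conjSubgroup g H ↔ g⁻¹ * x * g ∈ H := by
  simp only [conjSubgroup, Subgroup.mem_map, MulEquiv.coe_toMonoidHom, MulAut.conj_apply]
  constructor
  · rintro ⟨h, hh, rfl⟩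
    simpa [mul_assoc] using hh
  · exact fun hx => ⟨_, hx, by group⟩

theorem Subgroup.relIndex_ne_zero_iff_subset_mul_finite {H K : Subgroup G} :
    K.relIndex H ≠ 0 ↔ ∃ F : Set G, F.Finite ∧ (H : Set G) ⊆ K * F := by
  rw [Subgroup.relIndex, Subgroup.index_ne_zero_iff_finite]
  constructor
  · intro hfin
    refine ⟨Set.range fun q : H ⧸ K.subgroupOf H => ((q.out : H) : G)⁻¹, Set.finite_range _, ?_⟩
    intro h hh
    obtain ⟨k, hk⟩ := QuotientGroup.mk_out_eq_mul (K.subgroupOf H) ⟨h, hh⟩⁻¹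
    refine ⟨k, k.2, _, ⟨QuotientGroup.mk ⟨h, hh⟩⁻¹, rfl⟩, ?_⟩
    simp [hk]
  · rintro ⟨F, hF, hHKF⟩
    have : Finite F := hF.to_subtype
    have hcover : ∀ h : H, ∃ f : F, (h : G) * (f : G)⁻¹ ∈ K := fun h => by
      obtain ⟨k, hk, f, hf, hkf⟩ := hHKF h.2
      exact ⟨⟨f, hf⟩, by simpa [← hkf]⟩
    choose f hf using hcover
    refine Finite.of_injective (fun q : H ⧸ K.subgroupOf H => f q.out⁻¹) fun q q' hqq' => ?_
    rw [← q.out_eq', ← q'.out_eq', QuotientGroup.eq, Subgroup.mem_subgroupOf]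
    simpa [hqq', mul_assoc] using K.mul_mem (hf q.out⁻¹) (K.inv_mem (hf q'.out⁻¹))

theorem smul_coe_subgroup_mul (g : G) (H : Subgroup G) (F : Set G) :
    g • (H : Set G) * F = (conjSubgroup g H : Set G) * g • F := by
  ext x
  simp only [Set.mem_mul, Set.mem_smul_set, SetLike.mem_coe, mem_conjSubgroup, smul_eq_mul]
  constructor
  · rintro ⟨_, ⟨h, hh, rfl⟩, f, hf, rfl⟩
    exact ⟨g * h * g⁻¹, by simpa [mul_assoc], _, ⟨f, hf, rfl⟩, by group⟩
  · rintro ⟨c, hc, _, ⟨f, hf, rfl⟩, rfl⟩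
    exact ⟨_, ⟨_, hc, rfl⟩, f, hf, by group⟩

theorem relIndex_conjSubgroup_ne_zero_iff (g : G) (H K : Subgroup G) :
    (conjSubgroup g H).relIndex K ≠ 0 ↔
      ∃ F : Set G, F.Finite ∧ (K : Set G) ⊆ g • (H : Set G) * F := by
  simp_rw [Subgroup.relIndex_ne_zero_iff_subset_mul_finite, smul_coe_subgroup_mul]
  constructor
  · rintro ⟨F, hF, hKF⟩
    exact ⟨g⁻¹ • F, hF.smul_set, by rwa [smul_inv_smul]⟩
  · rintro ⟨F, hF, hKF⟩
    exact ⟨g • F, hF.smul_set, hKF⟩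

theorem relIndex_conjSubgroup_self (g : G) (H : Subgroup G) :
    H.relIndex (conjSubgroup g H) = (conjSubgroup g⁻¹ H).relIndex H := by
  rw [conjSubgroup, ← Subgroup.relIndex_comap]
  congr 1
  ext x
  simp [mem_conjSubgroup]

theorem exists_list_length_eq_wordLength {S : Set G} (hgen : Subgroup.closure S = ⊤) (g : G) :
    ∃ l : List G, l.length = wordLength S g ∧ (∀ x ∈ l, x ∈ S ∪ S⁻¹) ∧ l.prod = g := by
  have hg : g ∈ Submonoid.closure (S ∪ S⁻¹) := by
    rw [← Subgroup.closure_toSubmonoid, hgen]; trivial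
  obtain ⟨l, hl, hprod⟩ := Submonoid.exists_list_of_mem_closure hg
  exact Nat.sInf_mem
    (s := {n | ∃ l : List G, l.length = n ∧ (∀ x ∈ l, x ∈ S ∪ S⁻¹) ∧ l.prod = g})
    ⟨l.length, l, rfl, hl, hprod⟩

theorem finite_setOf_wordLength_le {S : Set G} (hS : S.Finite) (hgen : Subgroup.closure S = ⊤)
    (n : ℕ) : {g : G | wordLength S g ≤ n}.Finite := by
  have : Finite ↥(S ∪ S⁻¹) := (hS.union hS.inv).to_subtype
  refine ((List.finite_length_le ↥(S ∪ S⁻¹) n).image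
    fun l => (l.map Subtype.val).prod).subset ?_
  intro g hg
  obtain ⟨l, hlen, hl, hprod⟩ := exists_list_length_eq_wordLength hgen g
  lift l to List ↥(S ∪ S⁻¹) using hl
  exact ⟨l, by simpa [← hlen] using hg, hprod⟩

theorem wordLength_inv (S : Set G) (g : G) : wordLength S g⁻¹ = wordLength S g := by
  suffices h : ∀ g : G,
      {n | ∃ l : List G, l.length = n ∧ (∀ x ∈ l, x ∈ S ∪ S⁻¹) ∧ l.prod = g} ⊆
        {n | ∃ l : List G, l.length = n ∧ (∀ x ∈ l, x ∈ S ∪ S⁻¹) ∧ l.prod = g⁻¹} by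
    unfold wordLength
    congr 1
    exact (Set.Subset.antisymm (h g) (by simpa using h g⁻¹)).symm
  rintro g n ⟨l, rfl, hl, rfl⟩
  refine ⟨(l.map (·⁻¹)).reverse, by simp, ?_, by simp [List.prod_inv_reverse]⟩
  simp only [List.mem_reverse, List.mem_map]
  rintro _ ⟨x, hx, rfl⟩
  rcases hl x hx with hS | hS
  · exact Or.inr (by simpa using hS)
  · exact Or.inl hS

theorem wordDist_comm (S : Set G) (a b : G) : wordDist S a b = wordDist S b a := by
  rw [wordDist, wordDist, ← wordLength_inv, mul_inv_rev, inv_inv]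

theorem exists_wordDist_le_iff_subset_mul_finite {S : Set G} (hS : S.Finite)
    (hgen : Subgroup.closure S = ⊤) (X Y : Set G) :
    (∃ r : ℝ, ∀ b ∈ Y, ∃ a ∈ X, wordDist S a b ≤ r) ↔ ∃ F : Set G, F.Finite ∧ Y ⊆ X * F := by
  constructor
  · rintro ⟨r, hr⟩
    refine ⟨{g | wordLength S g ≤ ⌊r⌋₊}, finite_setOf_wordLength_le hS hgen _, fun b hb => ?_⟩
    obtain ⟨a, ha, hab⟩ := hr b hb
    exact ⟨a, ha, a⁻¹ * b, Nat.le_floor hab, by group⟩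
  · rintro ⟨F, hF, hYXF⟩
    obtain ⟨r, hr⟩ := (hF.image fun f => (wordLength S f : ℝ)).bddAbove
    refine ⟨r, fun b hb => ?_⟩
    obtain ⟨a, ha, f, hf, rfl⟩ := hYXF hb
    exact ⟨a, ha, by simpa [wordDist] using hr ⟨f, hf, rfl⟩⟩

theorem monotone_forall_exists_wordDist_le (S X Y : Set G) :
    Monotone fun r : ℝ => ∀ b ∈ Y, ∃ a ∈ X, wordDist S a b ≤ r :=
  fun _ _ hrs h b hb => (h b hb).imp fun _ ⟨ha, hab⟩ => ⟨ha, hab.trans hrs⟩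

end

/-- For a group `G` with a finite generating set `S`, equipped with the word metric,
a subgroup `H` is almost normal in `G` if and only if every left coset `gH` is at
finite Hausdorff distance from `H`. -/
theorem almostNormal_iff_cosets_finite_hausdorff_distance {G : Type*} [Group G]
    (S : Set G) (hS : S.Finite) (hgen : Subgroup.closure S = ⊤) (H : Subgroup G) :
    AlmostNormal H ↔
      ∀ g : G, ∃ r : ℝ, 0 ≤ r ∧
        (∀ a ∈ g • (H : Set G), ∃ b ∈ (H : Set G), wordDist S a b ≤ r) ∧
        (∀ b ∈ (H : Set G), ∃ a ∈ g • (H : Set G), wordDist S a b ≤ r) := by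
  refine forall_congr' fun g => ?_
  have hflip (r : ℝ) : (∀ a ∈ g • (H : Set G), ∃ b ∈ (H : Set G), wordDist S a b ≤ r) ↔
      ∀ a ∈ g • (H : Set G), ∃ b ∈ (H : Set G), wordDist S b a ≤ r :=
    forall₂_congr fun a _ => exists_congr fun b => and_congr_right' (by rw [wordDist_comm])
  simp only [hflip]
  rw [exists_nonneg_and_and_iff (monotone_forall_exists_wordDist_le _ _ _)
    (monotone_forall_exists_wordDist_le _ _ _), exists_wordDist_le_iff_subset_mul_finite hS hgen,
    exists_wordDist_le_iff_subset_mul_finite hS hgen, Subgroup.Commensurable,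
    relIndex_conjSubgroup_self, relIndex_conjSubgroup_ne_zero_iff,
    relIndex_conjSubgroup_ne_zero_iff]
  simp only [Set.smul_set_subset_iff_subset_inv_smul_set, smul_mul_assoc]
end

section
/- Let G be a group and let t ∈ G be an element of infinite order such that the cyclic subgroup ⟨t⟩ is almost normal in G. Then: (a) for every g ∈ G there exist nonzero integers p and q such that t^q = g t^p g⁻¹; and (b) there is a function h : G → ℝ (the height function) such that h(g) = log|p/q| whenever p, q are nonzero integers with t^q = g t^p g⁻¹, and h is a group homomorphism from G to the additive group (ℝ, +). -/
/-!
Since `⟨t⟩` is infinite and `⟨t⟩ ∩ g⟨t⟩g⁻¹` has finite index in it, some `t^q` with `q ≠ 0`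
is a conjugate `g t^p g⁻¹`. Raising two such relations for `g` to suitable powers and using
that `n ↦ t^n` is injective shows that the ratio `p/q` depends only on `g`; composing the
relations for `g` and `k` gives one for `gk` with ratio `(p/q)(p'/q')`. Hence `g ↦ log |p/q|`
is well defined and additive.
-/

namespace Subgroup

variable {G : Type*} [Group G]

theorem exists_mem_inf_ne_one_of_relIndex_ne_zero {H K : Subgroup G} [Infinite H]
    (hK : K.relIndex H ≠ 0) : ∃ x ∈ H, x ∈ K ∧ x ≠ 1 := by
  by_contra! hbot
  apply hK
  have : K.subgroupOf H = ⊥ := by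
    rw [eq_bot_iff]
    rintro ⟨x, hxH⟩ hxK
    exact Subtype.ext (hbot x hxH hxK)
  rw [relIndex, this, index_bot]
  exact Nat.card_eq_zero_of_infinite

end Subgroup

section ConjugatePowers

variable {G : Type*} [Group G] {t : G}

theorem zpow_mul_eq_conj_zpow_mul {g k : G} {p q p' q' : ℤ}
    (hg : t ^ q = g * t ^ p * g⁻¹) (hk : t ^ q' = k * t ^ p' * k⁻¹) :
    t ^ (q * q') = (g * k) * t ^ (p * p') * (g * k)⁻¹ := by
  calc t ^ (q * q') = g * (t ^ q') ^ p * g⁻¹ := by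
        rw [zpow_mul, hg, conj_zpow, ← zpow_mul, ← zpow_mul, mul_comm]
    _ = (g * k) * t ^ (p * p') * (g * k)⁻¹ := by
        rw [hk, conj_zpow, ← zpow_mul, mul_comm p' p]
        group

theorem mul_eq_mul_of_zpow_eq_conj_zpow (ht : ¬IsOfFinOrder t) {g : G} {p q p' q' : ℤ}
    (h : t ^ q = g * t ^ p * g⁻¹) (h' : t ^ q' = g * t ^ p' * g⁻¹) : q * p' = q' * p := by
  apply injective_zpow_iff_not_isOfFinOrder.mpr ht
  calc t ^ (q * p') = g * t ^ (p * p') * g⁻¹ := by rw [zpow_mul, h, conj_zpow, ← zpow_mul]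
    _ = t ^ (q' * p) := by rw [mul_comm p, zpow_mul t p', ← conj_zpow, ← h', ← zpow_mul]

theorem div_eq_div_of_zpow_eq_conj_zpow (ht : ¬IsOfFinOrder t) {g : G} {p q p' q' : ℤ}
    (hq : q ≠ 0) (hq' : q' ≠ 0)
    (h : t ^ q = g * t ^ p * g⁻¹) (h' : t ^ q' = g * t ^ p' * g⁻¹) :
    (p : ℝ) / q = p' / q' := by
  rw [div_eq_div_iff (by exact_mod_cast hq) (by exact_mod_cast hq')]
  have := mul_eq_mul_of_zpow_eq_conj_zpow ht h h'
  exact_mod_cast (by linear_combination -this : p * q' = p' * q)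

theorem exists_zpow_eq_conj_zpow (ht : ¬IsOfFinOrder t) {g : G}
    (hg : (conjSubgroup g (Subgroup.zpowers t)).relIndex (Subgroup.zpowers t) ≠ 0) :
    ∃ p q : ℤ, p ≠ 0 ∧ q ≠ 0 ∧ t ^ q = g * t ^ p * g⁻¹ := by
  have : Infinite (Subgroup.zpowers t) :=
    Set.infinite_coe_iff.mpr (infinite_zpowers.mpr ht)
  obtain ⟨_, ⟨q, rfl⟩, ⟨_, ⟨p, rfl⟩, hconj⟩, hq⟩ :=
    Subgroup.exists_mem_inf_ne_one_of_relIndex_ne_zero hg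
  have hpq : t ^ q = g * t ^ p * g⁻¹ := hconj.symm
  have hq0 : q ≠ 0 := by rintro rfl; exact hq (zpow_zero t)
  refine ⟨p, q, ?_, hq0, hpq⟩
  rintro rfl
  exact hq0 (injective_zpow_iff_not_isOfFinOrder.mpr ht (by simpa using hpq))

end ConjugatePowers

/-- If `t ∈ G` has infinite order and `⟨t⟩` is almost normal in `G`, then: (a) for
every `g ∈ G` there are nonzero integers `p`, `q` with `t^q = g t^p g⁻¹`; and (b)
there is a height function `h : G → ℝ` with `h g = log |p/q|` whenever
`t^q = g t^p g⁻¹` with `p, q` nonzero, and `h` is a homomorphism to `(ℝ, +)`. -/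
theorem height_function_exists {G : Type*} [Group G] (t : G)
    (ht : Infinite (Subgroup.zpowers t))
    (han : AlmostNormal (Subgroup.zpowers t)) :
    (∀ g : G, ∃ p q : ℤ, p ≠ 0 ∧ q ≠ 0 ∧ t ^ q = g * t ^ p * g⁻¹) ∧
    ∃ h : G → ℝ,
      (∀ (g : G) (p q : ℤ), p ≠ 0 → q ≠ 0 → t ^ q = g * t ^ p * g⁻¹ →
        h g = Real.log |(p : ℝ) / (q : ℝ)|) ∧
      ∀ g k : G, h (g * k) = h g + h k := by
  have hfin : ¬IsOfFinOrder t := infinite_zpowers.mp (Set.infinite_coe_iff.mp ht)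
  have hex g := exists_zpow_eq_conj_zpow hfin (han g).2
  refine ⟨hex, ?_⟩
  choose P Q hP hQ hPQ using hex
  have hspec (g : G) (p q : ℤ) (_ : p ≠ 0) (hq : q ≠ 0) (h : t ^ q = g * t ^ p * g⁻¹) :
      Real.log |(P g : ℝ) / Q g| = Real.log |(p : ℝ) / q| := by
    rw [div_eq_div_of_zpow_eq_conj_zpow hfin (hQ g) hq (hPQ g) h]
  refine ⟨fun g => Real.log |(P g : ℝ) / Q g|, hspec, fun g k => ?_⟩
  have hne (x : G) : |(P x : ℝ) / Q x| ≠ 0 := by simp [hP x, hQ x]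
  dsimp only
  rw [hspec (g * k) _ _ (mul_ne_zero (hP g) (hP k)) (mul_ne_zero (hQ g) (hQ k))
    (zpow_mul_eq_conj_zpow_mul (hPQ g) (hPQ k)), Int.cast_mul, Int.cast_mul, mul_div_mul_comm,
    abs_mul, Real.log_mul (hne g) (hne k)]
end

section
/- Let G be a finitely generated group and let t ∈ G be an element of infinite order such that the cyclic subgroup ⟨t⟩ is almost normal in G. Suppose that for all g ∈ G and all nonzero integers p, q, the relation t^q = g t^p g⁻¹ implies |p| = |q|. Then there exists a positive integer M such that g⟨t^M⟩g⁻¹ = ⟨t^M⟩ for all g ∈ G, i.e. the subgroup ⟨t^M⟩ is normal in G. -/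
open Subgroup

section

variable {G : Type*} [Group G]

theorem conjSubgroup_zpowers (g x : G) :
    conjSubgroup g (zpowers x) = zpowers (g * x * g⁻¹) :=
  MonoidHom.map_zpowers _ x

theorem mem_normalizer_iff_conjSubgroup_eq {H : Subgroup G} {g : G} :
    g ∈ normalizer (H : Set G) ↔ conjSubgroup g H = H :=
  mem_normalizer_iff_map_conj_eq

theorem conjSubgroup_eq_of_closure_eq_top {S : Set G} (hS : closure S = ⊤) {H : Subgroup G}
    (h : ∀ s ∈ S, conjSubgroup s H = H) (g : G) : conjSubgroup g H = H := by
  have hle : closure S ≤ normalizer (H : Set G) :=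
    (closure_le _).mpr fun s hs => mem_normalizer_iff_conjSubgroup_eq.mpr (h s hs)
  rw [hS, top_le_iff] at hle
  exact mem_normalizer_iff_conjSubgroup_eq.mp (hle ▸ mem_top g)

theorem pow_eq_conj_or_conj_inv {g x : G} (h : x = g * x * g⁻¹ ∨ x = g * x⁻¹ * g⁻¹) (k : ℕ) :
    x ^ k = g * x ^ k * g⁻¹ ∨ x ^ k = g * (x ^ k)⁻¹ * g⁻¹ := by
  rcases h with h | h
  · left; rw [← conj_pow, ← h]
  · right; rw [← inv_pow, ← conj_pow, ← h]

theorem conjSubgroup_zpowers_eq_of_eq_conj_or_conj_inv {g x : G}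
    (h : x = g * x * g⁻¹ ∨ x = g * x⁻¹ * g⁻¹) : conjSubgroup g (zpowers x) = zpowers x := by
  rcases h with h | h
  · rw [conjSubgroup_zpowers, ← h]
  · rw [← zpowers_inv (g := x), conjSubgroup_zpowers, ← h, zpowers_inv]

theorem exists_pow_eq_conj_or_conj_inv {t g : G} (ht : ¬IsOfFinOrder t)
    (hindex : (conjSubgroup g (zpowers t)).relIndex (zpowers t) ≠ 0)
    (hiso : ∀ p q : ℤ, p ≠ 0 → q ≠ 0 → t ^ q = g * t ^ p * g⁻¹ → |p| = |q|) :
    ∃ n : ℕ, 0 < n ∧ (t ^ n = g * t ^ n * g⁻¹ ∨ t ^ n = g * (t ^ n)⁻¹ * g⁻¹) := by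
  obtain ⟨n, hn, -, hmem, -⟩ := exists_pow_mem_of_relIndex_ne_zero hindex (mem_zpowers t)
  obtain ⟨_, hy, hconj⟩ := hmem
  obtain ⟨p, rfl⟩ := mem_zpowers_iff.mp hy
  replace hconj : t ^ (n : ℤ) = g * t ^ p * g⁻¹ := by simpa using hconj.symm
  have hp : p ≠ 0 := by
    rintro rfl
    exact ht (isOfFinOrder_iff_pow_eq_one.mpr ⟨n, hn, by simpa using hconj⟩)
  refine ⟨n, hn, ?_⟩
  rcases abs_eq_abs.mp (hiso p n hp (by omega) hconj) with rfl | rfl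
  · left; simpa using hconj
  · right; simpa using hconj

end

/-- Let `G` be finitely generated, `t` of infinite order with `⟨t⟩` almost normal
in `G`. If `t^q = g t^p g⁻¹` (with `p, q` nonzero) always implies `|p| = |q|`, then
some `⟨t^M⟩` (with `M` a positive integer) is normal in `G`. -/
theorem power_normal_of_trivial_height {G : Type*} [Group G] (hfg : Group.FG G)
    (t : G) (ht : Infinite (Subgroup.zpowers t))
    (han : AlmostNormal (Subgroup.zpowers t))
    (hiso : ∀ (g : G) (p q : ℤ), p ≠ 0 → q ≠ 0 → t ^ q = g * t ^ p * g⁻¹ → |p| = |q|) :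
    ∃ M : ℕ, 0 < M ∧ ∀ g : G,
      conjSubgroup g (Subgroup.zpowers (t ^ M)) = Subgroup.zpowers (t ^ M) := by
  have hinf : ¬IsOfFinOrder t := infinite_zpowers.mp (Set.infinite_coe_iff.mp ht)
  choose n hn hconj using fun g => exists_pow_eq_conj_or_conj_inv hinf (han g).2 (hiso g)
  obtain ⟨S, hS, hSfin⟩ := Group.fg_iff.mp hfg
  refine ⟨∏ s ∈ hSfin.toFinset, n s, Finset.prod_pos fun s _ => hn s,
    conjSubgroup_eq_of_closure_eq_top hS fun s hs => ?_⟩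
  obtain ⟨k, hk⟩ := Finset.dvd_prod_of_mem n (hSfin.mem_toFinset.mpr hs)
  rw [hk, pow_mul]
  exact conjSubgroup_zpowers_eq_of_eq_conj_or_conj_inv (pow_eq_conj_or_conj_inv (hconj s) k)
end
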